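/- (General criterion for asymmetric relaxation.) Let ψ : E → ℝ be three times continuously differentiable and let η¹, η² : ℝ → E both satisfy Newton's law η̇(t) = −λ(η(t) − η_q) with the same λ > 0 and target η_q. Write Fᵢ(t) := F(ηⁱ(t)) and Qᵢ(t) := ⟪η̇ⁱ(t), H(ηⁱ(t)) η̇ⁱ(t)⟫. If at some time t* the Riemannian speeds agree, Q₁(t*) = Q₂(t*), then λ (F₂''(t*) − F₁''(t*)) = D³ψ(η¹(t*))[η̇¹(t*), η̇¹(t*), η̇¹(t*)] − D³ψ(η²(t*))[η̇²(t*), η̇²(t*), η̇²(t*)]; i.e., the difference of second time-derivatives of the Bregman divergences at a speed-matching time is governed by the Amari–Chentsov tensor −D³ψ evaluated on the two velocities. -/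

import Mathlib

open scoped RealInnerProductSpace

/-! Along Newton's law `η_q - η = λ⁻¹ η̇` and `η̈ = -λ η̇`. Hence `F(η)' = -λ⁻¹ D²ψ(η)[η̇, η̇]`, and
differentiating once more gives `λ F(η)'' = 2λ D²ψ(η)[η̇, η̇] - D³ψ(η)[η̇, η̇, η̇]`. The `D²ψ` term is
`2λ` times the Riemannian speed `⟪η̇, H(η) η̇⟫`, so it cancels in the difference at a
speed-matching time. -/

lemma iteratedFDeriv_three_apply {𝕜 E F : Type*} [NontriviallyNormedField 𝕜]
    [NormedAddCommGroup E] [NormedSpace 𝕜 E] [NormedAddCommGroup F] [NormedSpace 𝕜 F]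
    (f : E → F) (z : E) (m : Fin 3 → E) :
    iteratedFDeriv 𝕜 3 f z m = fderiv 𝕜 (fderiv 𝕜 (fderiv 𝕜 f)) z (m 0) (m 1) (m 2) := by
  simp [iteratedFDeriv_succ_apply_right, Fin.init]

lemma inner_fderiv_gradient_apply {F : Type*} [NormedAddCommGroup F] [InnerProductSpace ℝ F]
    [CompleteSpace F] (f : F → ℝ) (x u v : F) :
    ⟪u, fderiv ℝ (gradient f) x v⟫ = iteratedFDeriv ℝ 2 f x ![v, u] := by
  have : gradient f = (InnerProductSpace.toDual ℝ F).symm ∘ fderiv ℝ f := rfl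
  rw [this, LinearIsometryEquiv.comp_fderiv, real_inner_comm, iteratedFDeriv_two_apply]
  exact InnerProductSpace.toDual_symm_apply

section Bregman

variable {E : Type*} [NormedAddCommGroup E] [NormedSpace ℝ E]

noncomputable def bregmanDiv (ψ : E → ℝ) (q x : E) : ℝ := ψ q - ψ x - fderiv ℝ ψ x (q - x)

variable {ψ : E → ℝ} {q : E} {η : ℝ → E} {lam : ℝ}

lemma HasDerivAt.bregmanDiv_comp (hψ : ContDiff ℝ 2 ψ) {v : E} {t : ℝ}
    (hη : HasDerivAt η v t) :
    HasDerivAt (fun s => bregmanDiv ψ q (η s)) (-fderiv ℝ (fderiv ℝ ψ) (η t) v (q - η t)) t := by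
  have hdψ : HasDerivAt (fun s => ψ (η s)) (fderiv ℝ ψ (η t) v) t :=
    ((hψ.differentiable two_ne_zero (η t)).hasFDerivAt).comp_hasDerivAt t hη
  have hd2ψ : HasDerivAt (fun s => fderiv ℝ ψ (η s)) (fderiv ℝ (fderiv ℝ ψ) (η t) v) t :=
    (((hψ.fderiv_right le_rfl).differentiable one_ne_zero (η t)).hasFDerivAt).comp_hasDerivAt
      t hη
  refine ((hdψ.const_sub (ψ q)).sub (hd2ψ.clm_apply (hη.const_sub q))).congr_deriv ?_
  rw [map_neg]
  ring

lemma sub_eq_inv_smul_deriv_of_newton (hlam : lam ≠ 0)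
    (hnewton : ∀ t, deriv η t = (-lam) • (η t - q)) (t : ℝ) : q - η t = lam⁻¹ • deriv η t := by
  rw [hnewton, smul_smul, inv_mul_eq_div, neg_div_self hlam, neg_one_smul, neg_sub]

lemma hasDerivAt_deriv_of_newton (hη : Differentiable ℝ η)
    (hnewton : ∀ t, deriv η t = (-lam) • (η t - q)) (t : ℝ) :
    HasDerivAt (deriv η) ((-lam) • deriv η t) t := by
  convert ((hη t).hasDerivAt.sub_const q).const_smul (-lam) using 1
  exact funext hnewton

lemma deriv_bregmanDiv_comp_of_newton (hψ : ContDiff ℝ 2 ψ) (hlam : lam ≠ 0)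
    (hη : Differentiable ℝ η) (hnewton : ∀ t, deriv η t = (-lam) • (η t - q)) :
    deriv (fun s => bregmanDiv ψ q (η s)) =
      fun s => -lam⁻¹ * fderiv ℝ (fderiv ℝ ψ) (η s) (deriv η s) (deriv η s) := by
  ext s
  rw [((hη s).hasDerivAt.bregmanDiv_comp hψ).deriv, sub_eq_inv_smul_deriv_of_newton hlam hnewton,
    map_smul, smul_eq_mul, neg_mul]

lemma mul_deriv_deriv_bregmanDiv_comp_of_newton (hψ : ContDiff ℝ 3 ψ) (hlam : lam ≠ 0)
    (hη : Differentiable ℝ η) (hnewton : ∀ t, deriv η t = (-lam) • (η t - q)) (t : ℝ) :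
    lam * deriv (deriv (fun s => bregmanDiv ψ q (η s))) t =
      2 * lam * iteratedFDeriv ℝ 2 ψ (η t) ![deriv η t, deriv η t] -
        iteratedFDeriv ℝ 3 ψ (η t) ![deriv η t, deriv η t, deriv η t] := by
  have hd3ψ : HasDerivAt (fun s => fderiv ℝ (fderiv ℝ ψ) (η s))
      (fderiv ℝ (fderiv ℝ (fderiv ℝ ψ)) (η t) (deriv η t)) t :=
    (((hψ.fderiv_right (by norm_num)).fderiv_right le_rfl).differentiable one_ne_zero
      (η t)).hasFDerivAt.comp_hasDerivAt t (hη t).hasDerivAt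
  have hv := hasDerivAt_deriv_of_newton hη hnewton t
  rw [deriv_bregmanDiv_comp_of_newton (hψ.of_le (by norm_num)) hlam hη hnewton,
    (((hd3ψ.clm_apply hv).clm_apply hv).const_mul (-lam⁻¹)).deriv,
    iteratedFDeriv_two_apply, iteratedFDeriv_three_apply]
  simp only [Matrix.cons_val_zero, Matrix.cons_val_one, Matrix.cons_val_two, Matrix.head_cons,
    Matrix.tail_cons, FunLike.coe_add, Pi.add_apply, map_smul, FunLike.coe_smul, Pi.smul_apply,
    smul_eq_mul]
  field_simp
  ring

end Bregman

/-- **General criterion for asymmetric relaxation.** For two Newtonian relaxations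
`η¹, η²` toward the same target with the same rate, at any time `t*` where the
Riemannian speeds agree, the difference of the second time-derivatives of the Bregman
divergences is governed by the Amari–Chentsov tensor `−D³ψ` evaluated on the two
velocities. -/
theorem asymmetric_relaxation_criterion
    (n : ℕ) (ψ : EuclideanSpace ℝ (Fin n) → ℝ) (hψ : ContDiff ℝ 3 ψ)
    (ηq : EuclideanSpace ℝ (Fin n)) (lam : ℝ) (hlam : 0 < lam)
    (H : EuclideanSpace ℝ (Fin n) →
      EuclideanSpace ℝ (Fin n) →L[ℝ] EuclideanSpace ℝ (Fin n))
    (hH : ∀ η, H η = fderiv ℝ (gradient ψ) η)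
    (F : EuclideanSpace ℝ (Fin n) → ℝ)
    (hF : ∀ η, F η = ψ ηq - ψ η - ⟪gradient ψ η, ηq - η⟫)
    (η₁ η₂ : ℝ → EuclideanSpace ℝ (Fin n))
    (hη₁ : Differentiable ℝ η₁) (hη₂ : Differentiable ℝ η₂)
    (hnewton₁ : ∀ t, deriv η₁ t = (-lam) • (η₁ t - ηq))
    (hnewton₂ : ∀ t, deriv η₂ t = (-lam) • (η₂ t - ηq))
    (Q₁ Q₂ : ℝ → ℝ)
    (hQ₁ : ∀ t, Q₁ t = ⟪deriv η₁ t, H (η₁ t) (deriv η₁ t)⟫)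
    (hQ₂ : ∀ t, Q₂ t = ⟪deriv η₂ t, H (η₂ t) (deriv η₂ t)⟫)
    (tstar : ℝ) (hspeed : Q₁ tstar = Q₂ tstar) :
    lam * (deriv (deriv (fun t => F (η₂ t))) tstar -
        deriv (deriv (fun t => F (η₁ t))) tstar) =
      iteratedFDeriv ℝ 3 ψ (η₁ tstar) ![deriv η₁ tstar, deriv η₁ tstar, deriv η₁ tstar] -
      iteratedFDeriv ℝ 3 ψ (η₂ tstar) ![deriv η₂ tstar, deriv η₂ tstar, deriv η₂ tstar] := by
  have hF' : F = bregmanDiv ψ ηq := by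
    ext η
    rw [hF, inner_gradient_left, bregmanDiv]
  have hspeed' : iteratedFDeriv ℝ 2 ψ (η₁ tstar) ![deriv η₁ tstar, deriv η₁ tstar] =
      iteratedFDeriv ℝ 2 ψ (η₂ tstar) ![deriv η₂ tstar, deriv η₂ tstar] := by
    rwa [hQ₁, hQ₂, hH, hH, inner_fderiv_gradient_apply, inner_fderiv_gradient_apply] at hspeed
  rw [mul_sub, hF', mul_deriv_deriv_bregmanDiv_comp_of_newton hψ hlam.ne' hη₁ hnewton₁,
    mul_deriv_deriv_bregmanDiv_comp_of_newton hψ hlam.ne' hη₂ hnewton₂, hspeed']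
  ring
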